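/- Let λ > 0, let σ be a Borel measure on ℝ₊, let J ⊂ ℝ₊ be a bounded interval with center x_J and length |J|, and let E ⊂ ℝ₊ be a Borel set such that |x − y| > |J| for every x ∈ J and y ∈ E. Then there exist constants 0 < c(λ) ≤ C(λ) < ∞, depending only on λ, such that for every x ∈ J and every t ∈ (0, |J|]: c(λ) · (t/|J|) · P_σ(1_E)(x_J, |J|) ≤ P_σ(1_E)(x, t) ≤ C(λ) · (t/|J|) · P_σ(1_E)(x_J, |J|). -/

import Mathlib

open MeasureTheory Set ENNReal

/-- The Bessel Poisson kernel given by Weinstein's formula. -/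
noncomputable def PK (lam t x y : ℝ) : ℝ :=
  (2 * lam * t / Real.pi) *
    ∫ θ in Set.Ioo (0 : ℝ) Real.pi,
      Real.sin θ ^ (2 * lam - 1) *
        (x ^ 2 + y ^ 2 + t ^ 2 - 2 * x * y * Real.cos θ) ^ (-(lam + 1))

/-- The Poisson extension `P_σ f (x, t)` of a nonnegative function on `ℝ₊`. -/
noncomputable def Pfwd (lam : ℝ) (σ : Measure ℝ) (f : ℝ → ℝ≥0∞) (x t : ℝ) : ℝ≥0∞ :=
  ∫⁻ y in Set.Ioi (0 : ℝ), ENNReal.ofReal (PK lam t x y) * f y ∂σ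

/-- The adjoint operator `P*_μ g (y)` of a nonnegative function on `ℝ²₊₊`. -/
noncomputable def Padj (lam : ℝ) (μ : Measure (ℝ × ℝ)) (g : ℝ × ℝ → ℝ≥0∞) (y : ℝ) : ℝ≥0∞ :=
  ∫⁻ p in Set.Ioi (0 : ℝ) ×ˢ Set.Ioi (0 : ℝ), ENNReal.ofReal (PK lam p.2 p.1 y) * g p ∂μ

/-- The triple `3I` of the interval `I = (a, b)`, intersected with `ℝ₊`. -/
def tri (a b : ℝ) : Set ℝ :=
  Set.Ioo ((a + b) / 2 - 3 * (b - a) / 2) ((a + b) / 2 + 3 * (b - a) / 2) ∩ Set.Ioi 0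

/-- The Carleson box `Î = I × [0, |I|]` of the interval `I = (a, b)`. -/
def boxI (a b : ℝ) : Set (ℝ × ℝ) := Set.Ioo a b ×ˢ Set.Icc 0 (b - a)

/-- The enlarged box `3Î = 3I × [0, 3|I|]` of the interval `I = (a, b)`. -/
def boxI3 (a b : ℝ) : Set (ℝ × ℝ) := tri a b ×ˢ Set.Icc 0 (3 * (b - a))

/-- The two-weight norm inequality for the Bessel Poisson operator with constant `N`,
for nonnegative `f ∈ L²(ℝ₊; σ)`. -/
def NormIneq (lam : ℝ) (σ : Measure ℝ) (μ : Measure (ℝ × ℝ)) (N : ℝ≥0∞) : Prop :=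
  ∀ f : ℝ → ℝ≥0∞, Measurable f → (∫⁻ y in Set.Ioi (0 : ℝ), f y ^ 2 ∂σ) < ∞ →
    (∫⁻ p in Set.Ioi (0 : ℝ) ×ˢ Set.Ioi (0 : ℝ), Pfwd lam σ f p.1 p.2 ^ 2 ∂μ)
      ≤ N ^ 2 * ∫⁻ y in Set.Ioi (0 : ℝ), f y ^ 2 ∂σ

/-- The dual two-weight norm inequality with constant `N`, for nonnegative
`g ∈ L²(ℝ²₊₊; μ)`. -/
def DualNormIneq (lam : ℝ) (σ : Measure ℝ) (μ : Measure (ℝ × ℝ)) (N : ℝ≥0∞) : Prop :=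
  ∀ g : ℝ × ℝ → ℝ≥0∞, Measurable g →
    (∫⁻ p in Set.Ioi (0 : ℝ) ×ˢ Set.Ioi (0 : ℝ), g p ^ 2 ∂μ) < ∞ →
    (∫⁻ y in Set.Ioi (0 : ℝ), Padj lam μ g y ^ 2 ∂σ)
      ≤ N ^ 2 * ∫⁻ p in Set.Ioi (0 : ℝ) ×ˢ Set.Ioi (0 : ℝ), g p ^ 2 ∂μ

/-- The forward testing condition with constant `F`:
`∫_{3Î} (P_σ 1_I)² dμ ≤ F² σ(I)` for every bounded interval `I ⊂ ℝ₊`. -/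
def FwdTesting (lam : ℝ) (σ : Measure ℝ) (μ : Measure (ℝ × ℝ)) (F : ℝ≥0∞) : Prop :=
  ∀ a b : ℝ, 0 ≤ a → a < b →
    (∫⁻ p in boxI3 a b, Pfwd lam σ ((Set.Ioo a b).indicator 1) p.1 p.2 ^ 2 ∂μ)
      ≤ F ^ 2 * σ (Set.Ioo a b)

/-- The backward testing condition with constant `B`:
`∫_{3I} (P*_μ (t 1_Î))² dσ ≤ B² ∫_Î t² dμ` for every bounded interval `I ⊂ ℝ₊`. -/
def BwdTesting (lam : ℝ) (σ : Measure ℝ) (μ : Measure (ℝ × ℝ)) (B : ℝ≥0∞) : Prop :=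
  ∀ a b : ℝ, 0 ≤ a → a < b →
    (∫⁻ y in tri a b,
        Padj lam μ ((boxI a b).indicator fun p => ENNReal.ofReal p.2) y ^ 2 ∂σ)
      ≤ B ^ 2 * ∫⁻ p in boxI a b, ENNReal.ofReal p.2 ^ 2 ∂μ

/-! Writing `D(x, t) = x² + y² + t² − 2xy cos θ` for the denominator in Weinstein's formula,
`D(x, t) ≤ 7 D(x_J, |J|)` and `D(x_J, |J|) ≤ 7 D(x, t)` uniformly in `θ` once `y` is
`|J|`-separated from `J` and `t ≤ |J|`: all of `(x − y)²`, `t²` and `|J|²` are comparable to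
`(x_J − y)²`. Hence the `θ`-integrals agree up to `7^(λ+1)`, the kernels `P_t(x, y)` and
`(t/|J|) P_{|J|}(x_J, y)` agree up to the same factor, and integrating over `E` gives the claim. -/

lemma sq_add_sq_add_sq_sub_mul_cos_pos {x y t : ℝ} (θ : ℝ) (ht : t ≠ 0) :
    0 < x ^ 2 + y ^ 2 + t ^ 2 - 2 * x * y * Real.cos θ := by
  set c := Real.cos θ
  have hc₁ : -1 ≤ c := Real.neg_one_le_cos θ
  have hc₂ : c ≤ 1 := Real.cos_le_one θ
  nlinarith [sq_nonneg (x - c * y), mul_nonneg (sub_nonneg.2 hc₂) (neg_le_iff_add_nonneg.1 hc₁),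
    sq_nonneg y, pow_pos (sq_pos_of_ne_zero ht) 1]

lemma sq_add_sq_add_sq_sub_mul_cos_le {u v y T S : ℝ} (θ : ℝ) (hv : 0 ≤ v) (hy : 0 ≤ y)
    (huv : |u - v| ≤ |v - y| / 2) (hT : |T| ≤ |v - y|) :
    u ^ 2 + y ^ 2 + T ^ 2 - 2 * u * y * Real.cos θ ≤
      7 * (v ^ 2 + y ^ 2 + S ^ 2 - 2 * v * y * Real.cos θ) := by
  set c := Real.cos θ
  have hc₂ : c ≤ 1 := Real.cos_le_one θ
  have hc₁ : -1 ≤ c := Real.neg_one_le_cos θ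
  set d := |v - y|
  have hd : d ^ 2 = (v - y) ^ 2 := sq_abs _
  have hys : 0 ≤ y * (1 - c) := mul_nonneg hy (by linarith)
  have huy : (u - y) ^ 2 ≤ (3 / 2 * d) ^ 2 := by
    refine sq_le_sq' ?_ ?_ <;> linarith [abs_le.1 huv, abs_le.1 (le_refl d)]
  have hT2 : T ^ 2 ≤ d ^ 2 := sq_le_sq.2 (by rwa [abs_abs])
  have hshift : (u - v) * (y * (1 - c)) ≤ d / 2 * (y * (1 - c)) :=
    mul_le_mul_of_nonneg_right ((le_abs_self _).trans huv) hys
  have hcross : d * (y * (1 - c)) ≤ 2 * v * (y * (1 - c)) + 3 * d ^ 2 := by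
    rcases le_total d (2 * v) with h | h
    · nlinarith [mul_le_mul_of_nonneg_right h hys]
    · have hyd : y * (1 - c) ≤ 3 * d := by nlinarith [neg_abs_le (v - y)]
      nlinarith [mul_le_mul_of_nonneg_left hyd (abs_nonneg (v - y))]
  nlinarith [sq_nonneg S, mul_nonneg hv hys]

lemma rpow_neg_le_mul_rpow_neg {p K D₁ D₂ : ℝ} (hp : 0 ≤ p) (hK : 0 < K) (hD₁ : 0 < D₁)
    (hD₂ : 0 ≤ D₂) (h : D₁ ≤ K * D₂) : D₂ ^ (-p) ≤ K ^ p * D₁ ^ (-p) := by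
  calc D₂ ^ (-p) = K ^ p * (K * D₂) ^ (-p) := by
        rw [Real.mul_rpow hK.le hD₂, ← mul_assoc, ← Real.rpow_add hK, add_neg_cancel,
          Real.rpow_zero, one_mul]
    _ ≤ K ^ p * D₁ ^ (-p) :=
        mul_le_mul_of_nonneg_left (Real.rpow_le_rpow_of_nonpos hD₁ h (neg_nonpos.2 hp))
          (Real.rpow_nonneg hK.le p)

lemma integral_le_mul_integral_of_ae_le_mul {α : Type*} [MeasurableSpace α] {μ : Measure α}
    {f g : α → ℝ} {C D : ℝ} (hf : AEStronglyMeasurable f μ) (hg : AEStronglyMeasurable g μ)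
    (hf₀ : 0 ≤ᵐ[μ] f) (hg₀ : 0 ≤ᵐ[μ] g) (hfg : ∀ᵐ a ∂μ, f a ≤ C * g a)
    (hgf : ∀ᵐ a ∂μ, g a ≤ D * f a) :
    ∫ a, f a ∂μ ≤ C * ∫ a, g a ∂μ := by
  by_cases hgi : Integrable g μ
  · have hfi : Integrable f μ := (hgi.const_mul C).mono' hf <| by
      filter_upwards [hf₀, hfg] with a h₀ h using by rwa [Real.norm_of_nonneg h₀]
    rw [← integral_const_mul]
    exact integral_mono_ae hfi (hgi.const_mul C) hfg
  · have hfi : ¬Integrable f μ := fun hfi => hgi <| (hfi.const_mul D).mono' hg <| by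
      filter_upwards [hg₀, hgf] with a h₀ h using by rwa [Real.norm_of_nonneg h₀]
    simp [integral_undef hfi, integral_undef hgi]

noncomputable def weinsteinIntegrand (lam t x y θ : ℝ) : ℝ :=
  Real.sin θ ^ (2 * lam - 1) * (x ^ 2 + y ^ 2 + t ^ 2 - 2 * x * y * Real.cos θ) ^ (-(lam + 1))

lemma weinsteinIntegrand_nonneg {lam t x y θ : ℝ} (hθ : θ ∈ Ioo 0 Real.pi) (ht : t ≠ 0) :
    0 ≤ weinsteinIntegrand lam t x y θ :=
  mul_nonneg (Real.rpow_nonneg (Real.sin_nonneg_of_nonneg_of_le_pi hθ.1.le hθ.2.le) _)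
    (Real.rpow_nonneg (sq_add_sq_add_sq_sub_mul_cos_pos θ ht).le _)

lemma weinsteinIntegrand_le {lam t t' x x' y θ : ℝ} (hlam : -1 ≤ lam) (hθ : θ ∈ Ioo 0 Real.pi)
    (hx : 0 ≤ x) (hy : 0 ≤ y) (ht : t ≠ 0) (ht' : t' ≠ 0) (hxx' : |x' - x| ≤ |x - y| / 2)
    (ht'x : |t'| ≤ |x - y|) :
    weinsteinIntegrand lam t x y θ ≤ 7 ^ (lam + 1) * weinsteinIntegrand lam t' x' y θ := by
  have hD := rpow_neg_le_mul_rpow_neg (p := lam + 1) (by linarith) (by norm_num : (0 : ℝ) < 7)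
    (sq_add_sq_add_sq_sub_mul_cos_pos θ ht') (sq_add_sq_add_sq_sub_mul_cos_pos θ ht).le
    (sq_add_sq_add_sq_sub_mul_cos_le θ hx hy hxx' ht'x)
  unfold weinsteinIntegrand
  rw [mul_left_comm]
  exact mul_le_mul_of_nonneg_left hD
    (Real.rpow_nonneg (Real.sin_nonneg_of_nonneg_of_le_pi hθ.1.le hθ.2.le) _)

lemma PK_le_mul_PK {lam t t' x x' y : ℝ} (hlam : 0 ≤ lam) (hx : 0 ≤ x) (hx' : 0 ≤ x')
    (hy : 0 ≤ y) (ht : 0 < t) (ht' : 0 < t') (hxy : |x - x'| ≤ |x - y| / 2)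
    (hx'y : |x - x'| ≤ |x' - y| / 2) (htx' : t ≤ |x' - y|) (ht'x : t' ≤ |x - y|) :
    PK lam t x y ≤ 7 ^ (lam + 1) * (t / t') * PK lam t' x' y := by
  have hI : ∫ θ in Ioo 0 Real.pi, weinsteinIntegrand lam t x y θ ≤
      7 ^ (lam + 1) * ∫ θ in Ioo 0 Real.pi, weinsteinIntegrand lam t' x' y θ := by
    refine integral_le_mul_integral_of_ae_le_mul (D := 7 ^ (lam + 1))
      (by unfold weinsteinIntegrand; fun_prop) (by unfold weinsteinIntegrand; fun_prop)
      ?_ ?_ ?_ ?_ <;> refine ae_restrict_of_forall_mem measurableSet_Ioo fun θ hθ => ?_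
    · exact weinsteinIntegrand_nonneg hθ ht.ne'
    · exact weinsteinIntegrand_nonneg hθ ht'.ne'
    · refine weinsteinIntegrand_le (by linarith) hθ hx hy ht.ne' ht'.ne' ?_ ?_
      · rwa [abs_sub_comm]
      · rwa [abs_of_pos ht']
    · refine weinsteinIntegrand_le (by linarith) hθ hx' hy ht'.ne' ht.ne' hx'y ?_
      rwa [abs_of_pos ht]
  calc PK lam t x y
      = 2 * lam * t / Real.pi * ∫ θ in Ioo 0 Real.pi, weinsteinIntegrand lam t x y θ := rfl
    _ ≤ 2 * lam * t / Real.pi *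
          (7 ^ (lam + 1) * ∫ θ in Ioo 0 Real.pi, weinsteinIntegrand lam t' x' y θ) := by
        gcongr
    _ = 7 ^ (lam + 1) * (t / t') * PK lam t' x' y := by
        unfold PK weinsteinIntegrand
        field_simp

lemma Pfwd_indicator_le_ofReal_mul {lam t t' x x' c : ℝ} {σ : Measure ℝ} {E : Set ℝ}
    (hc : 0 ≤ c) (h : ∀ y ∈ E, PK lam t x y ≤ c * PK lam t' x' y) :
    Pfwd lam σ (E.indicator 1) x t ≤ ENNReal.ofReal c * Pfwd lam σ (E.indicator 1) x' t' := by
  unfold Pfwd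
  rw [← lintegral_const_mul' _ _ ENNReal.ofReal_ne_top]
  refine lintegral_mono fun y => ?_
  by_cases hy : y ∈ E
  · simpa [hy, ← ENNReal.ofReal_mul hc] using ENNReal.ofReal_le_ofReal (h y hy)
  · simp [hy]

lemma ENNReal.ofReal_inv_mul_le {r : ℝ} {a b : ℝ≥0∞} (hr : 0 < r) (h : a ≤ ENNReal.ofReal r * b) :
    ENNReal.ofReal r⁻¹ * a ≤ b := by
  rwa [ENNReal.ofReal_inv_of_pos hr, ENNReal.inv_mul_le_iff (by simpa using hr) ofReal_ne_top]

/-- If `E ⊂ ℝ₊` is a Borel set with `|x − y| > |J|` for all `x ∈ J`,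
`y ∈ E`, then for `x ∈ J` and `0 < t ≤ |J|`,
`P_σ(1_E)(x, t) ≈ (t/|J|) P_σ(1_E)(x_J, |J|)` with constants depending only on `λ`. -/
theorem bessel_poisson_extension_comparison (lam : ℝ) (hlam : 0 < lam) :
    ∃ c C : ℝ, 0 < c ∧ c ≤ C ∧
      ∀ (σ : Measure ℝ) (a b : ℝ), 0 ≤ a → a < b →
        ∀ E : Set ℝ, MeasurableSet E → E ⊆ Set.Ioi 0 →
          (∀ x ∈ Set.Ioo a b, ∀ y ∈ E, b - a < |x - y|) →
          ∀ x ∈ Set.Ioo a b, ∀ t : ℝ, 0 < t → t ≤ b - a →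
            ENNReal.ofReal (c * (t / (b - a)))
                * Pfwd lam σ (E.indicator 1) ((a + b) / 2) (b - a)
              ≤ Pfwd lam σ (E.indicator 1) x t ∧
            Pfwd lam σ (E.indicator 1) x t
              ≤ ENNReal.ofReal (C * (t / (b - a)))
                * Pfwd lam σ (E.indicator 1) ((a + b) / 2) (b - a) := by
  set C : ℝ := 7 ^ (lam + 1)
  have hC : 1 ≤ C := Real.one_le_rpow (by norm_num) (by linarith)
  refine ⟨C⁻¹, C, by positivity, (inv_le_one_of_one_le₀ hC).trans hC, ?_⟩
  intro σ a b ha hab E _ hE hsep x hx t ht htL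
  set m := (a + b) / 2 with hm_def
  have hm : m ∈ Ioo a b := ⟨by linarith, by linarith⟩
  have hxm : |x - m| ≤ (b - a) / 2 := abs_sub_le_iff.2 ⟨by linarith [hx.2], by linarith [hx.1]⟩
  have hkernel (y : ℝ) (hy : y ∈ E) : PK lam t x y ≤ C * (t / (b - a)) * PK lam (b - a) m y ∧
      PK lam (b - a) m y ≤ C * ((b - a) / t) * PK lam t x y := by
    have hxy := hsep x hx y hy
    have hmy := hsep m hm y hy
    have hy₀ : 0 ≤ y := (hE hy).le
    constructor
    · exact PK_le_mul_PK hlam.le (ha.trans hx.1.le) (ha.trans hm.1.le) hy₀ ht (by linarith)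
        (by linarith) (by linarith) (by linarith) hxy.le
    · refine PK_le_mul_PK hlam.le (ha.trans hm.1.le) (ha.trans hx.1.le) hy₀ (by linarith) ht
        ?_ ?_ hxy.le (by linarith) <;> rw [abs_sub_comm] <;> linarith
  constructor
  · have h := Pfwd_indicator_le_ofReal_mul (σ := σ) (by positivity) fun y hy => (hkernel y hy).2
    convert ENNReal.ofReal_inv_mul_le (by positivity) h using 3
    field_simp
  · exact Pfwd_indicator_le_ofReal_mul (by positivity) fun y hy => (hkernel y hy).1
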